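/- Let r ≥ 1 be an integer, let p be an odd prime, and let N be a positive integer with (−1)^r N ≡ 0 or 1 (mod 4). For a positive integer M with (−1)^r M ≡ 0,1 (mod 4), write (−1)^r M = D·v² with D the discriminant of ℚ(√((−1)^r M)) and v > 0, and set c(M) := L(1+r, χ_D) · T_{r+1}^{χ_D}(v) / v^{2r+1}. Then the weight −r+1/2 Hecke relation holds with eigenvalue 1 + p^{−2r−1}: c(p²N) + ((−1)^r N | p) · p^{−r−1} · c(N) + p^{−2r−1} · c(N/p²) = (1 + p^{−2r−1}) · c(N), where ((−1)^r N | p) is the Legendre symbol modulo p and c(N/p²) is taken to be 0 when p² does not divide N. -/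

import Mathlib

open scoped Real BigOperators

/-- `D` is a fundamental discriminant: either `D ≡ 1 (mod 4)` and squarefree, or
`D = 4m` with `m ≡ 2, 3 (mod 4)` squarefree. -/
def IsFundDisc (D : ℤ) : Prop :=
  (D % 4 = 1 ∧ Squarefree D) ∨
  (D % 4 = 0 ∧ Squarefree (D / 4) ∧ ((D / 4) % 4 = 2 ∨ (D / 4) % 4 = 3))

/-- The Kronecker symbol `(D/2)`. -/
def kronTwo (D : ℤ) : ℤ :=
  if 2 ∣ D then 0 else if D % 8 = 1 ∨ D % 8 = 7 then 1 else -1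

/-- The Kronecker symbol `(D/m)` for `m ≥ 1`; for a fundamental discriminant `D` this is
the character `χ_D`. -/
noncomputable def kronecker (D : ℤ) (m : ℕ) : ℤ :=
  kronTwo D ^ (padicValNat 2 m) * jacobiSym D (m / 2 ^ padicValNat 2 m)

/-- The Dirichlet series `L(s, χ_D) = Σ_{m ≥ 1} χ_D(m) m^(-s)` (convergent for
`Re(s) > 1`). -/
noncomputable def LKron (D : ℤ) (s : ℂ) : ℂ :=
  ∑' m : ℕ+, ((kronecker D (m : ℕ) : ℤ) : ℂ) * (((m : ℕ) : ℂ)) ^ (-s)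

/-- The divisor power sum `σ_w(u) = Σ_{d ∣ u} d^w` with complex exponent `w`. -/
noncomputable def sigmaC (w : ℂ) (u : ℕ) : ℂ := ∑ d ∈ u.divisors, ((d : ℂ)) ^ w

/-- `T_s^χ(v) = Σ_{a ∣ v} μ(a) χ(a) a^(s-1) σ_{2s-1}(v/a)`. -/
noncomputable def TT (χ : ℕ → ℂ) (s : ℂ) (v : ℕ) : ℂ :=
  ∑ a ∈ v.divisors,
    ((ArithmeticFunction.moebius a : ℤ) : ℂ) * χ a * ((a : ℂ)) ^ (s - 1) *
      sigmaC (2 * s - 1) (v / a)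

/-!
Write `(-1)^r N = D v²`, so that `(-1)^r p² N = D (vp)²` and, when `p ∣ v`,
`(-1)^r N / p² = D (v/p)²`. The Legendre symbol `(D v² | p)` is `0` if `p ∣ v` and `χ_D(p)`
otherwise, and `p² ∣ N ↔ p ∣ v` because a fundamental discriminant has no odd square factor.
After clearing the common factor `L(1+r, χ_D)` and the powers of `v` and `p`, the relation
becomes an identity for the multiplicative function `T = (μ χ_D id^r) * σ_{2r+1}`:
`T(vp) + p^{2r+1} T(v/p) = (p^{2r+1} + 1) T(v)` if `p ∣ v`, and `T(vp) = T(p) T(v)` otherwise.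
On powers of `p`, `T(p^n) = S_{n+1} - χ_D(p) p^r S_n` with `S_n = Σ_{j<n} p^{(2r+1)j}`, and the
three-term recurrence of the geometric sums `S_n` passes to `T(p^n)`.
-/

open ArithmeticFunction Finset
open scoped ArithmeticFunction.Moebius ArithmeticFunction.sigma

lemma Int.exists_squarefree_mul_sq {n : ℤ} (hn : n ≠ 0) :
    ∃ A : ℤ, ∃ b : ℕ, Squarefree A ∧ 0 < b ∧ n = A * (b : ℤ) ^ 2 := by
  obtain ⟨a, b, -, hb, hab, ha⟩ := Nat.sq_mul_squarefree_of_pos (Int.natAbs_pos.mpr hn)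
  refine ⟨n.sign * a, b, ?_, hb, ?_⟩
  · rwa [← Int.squarefree_natAbs, Int.natAbs_mul, Int.natAbs_sign_of_ne_zero hn, one_mul,
      Int.natAbs_natCast]
  · conv_lhs => rw [← Int.sign_mul_natAbs n, ← hab]
    push_cast
    ring

lemma Squarefree.emod_four_ne_zero {A : ℤ} (hA : Squarefree A) : A % 4 ≠ 0 := by
  intro h4
  have := hA 2 (by omega)
  rw [Int.isUnit_iff] at this
  omega

lemma exists_isFundDisc_mul_sq {n : ℤ} (hn : n ≠ 0) (h4 : n % 4 = 0 ∨ n % 4 = 1) :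
    ∃ D : ℤ, ∃ v : ℕ, IsFundDisc D ∧ 0 < v ∧ n = D * (v : ℤ) ^ 2 := by
  obtain ⟨A, b, hA, hb, rfl⟩ := Int.exists_squarefree_mul_sq hn
  have hA4 := hA.emod_four_ne_zero
  by_cases hA1 : A % 4 = 1
  · exact ⟨A, b, Or.inl ⟨hA1, hA⟩, hb, rfl⟩
  -- For odd `b` we would have `A b² ≡ A ≡ 2, 3 (mod 4)`.
  obtain ⟨w, rfl⟩ : 2 ∣ b := by
    by_contra hodd
    have hsq := Int.sq_mod_four_eq_one_of_odd (Int.odd_iff.mpr (by omega : (b : ℤ) % 2 = 1))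
    rw [Int.mul_emod, hsq] at h4
    omega
  refine ⟨4 * A, w, Or.inr ⟨by omega, ?_, ?_⟩, by omega, by push_cast; ring⟩
  · rwa [Int.mul_ediv_cancel_left _ four_ne_zero]
  · rw [Int.mul_ediv_cancel_left _ four_ne_zero]
    omega

lemma IsFundDisc.not_sq_dvd {D : ℤ} (hD : IsFundDisc D) {p : ℕ} (hp : p.Prime) (hp2 : p ≠ 2) :
    ¬ (p : ℤ) ^ 2 ∣ D := by
  have hunit : ¬ IsUnit (p : ℤ) := by
    rw [Int.isUnit_iff]
    have := hp.two_le
    omega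
  rcases hD with ⟨-, hsf⟩ | ⟨h4, hsf, -⟩
  · exact fun h => hunit (hsf _ (sq (p : ℤ) ▸ h))
  · intro h
    have hcop : IsCoprime ((p : ℤ) ^ 2) 4 := by
      have h2 : IsCoprime (p : ℤ) ((2 : ℕ) : ℤ) :=
        Nat.Coprime.isCoprime ((Nat.coprime_primes hp Nat.prime_two).mpr hp2)
      simpa using h2.pow (m := 2) (n := 2)
    have hD : D = 4 * (D / 4) := (Int.mul_ediv_cancel' (Int.dvd_of_emod_eq_zero h4)).symm
    exact hunit (hsf _ (sq (p : ℤ) ▸ hcop.dvd_of_dvd_mul_left (hD ▸ h)))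

lemma IsFundDisc.sq_dvd_mul_sq_iff {D : ℤ} (hD : IsFundDisc D) {p : ℕ} (hp : p.Prime)
    (hp2 : p ≠ 2) {v : ℤ} : (p : ℤ) ^ 2 ∣ D * v ^ 2 ↔ (p : ℤ) ∣ v := by
  refine ⟨fun h => ?_, fun h => Dvd.dvd.mul_left (pow_dvd_pow_of_dvd h 2) D⟩
  by_contra hpv
  have hcop : IsCoprime ((p : ℤ) ^ 2) (v ^ 2) :=
    ((Nat.prime_iff_prime_int.mp hp).coprime_iff_not_dvd.mpr hpv).pow
  exact hD.not_sq_dvd hp hp2 (hcop.dvd_of_dvd_mul_right h)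

lemma IsFundDisc.sq_dvd_iff_dvd_of_neg_one_pow_mul_eq {D : ℤ} (hD : IsFundDisc D) {p : ℕ}
    (hp : p.Prime) (hp2 : p ≠ 2) {r N v : ℕ} (h : (-1 : ℤ) ^ r * N = D * (v : ℤ) ^ 2) :
    p ^ 2 ∣ N ↔ p ∣ v := by
  rw [← Int.natCast_dvd_natCast, ← Int.natCast_dvd_natCast,
    ← ((isUnit_neg_one (α := ℤ)).pow r).dvd_mul_left, h, Nat.cast_pow,
    hD.sq_dvd_mul_sq_iff hp hp2]

lemma kronecker_one (D : ℤ) : kronecker D 1 = 1 := by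
  simp [kronecker]

lemma kronecker_mul (D : ℤ) {m n : ℕ} (hm : m ≠ 0) (hn : n ≠ 0) :
    kronecker D (m * n) = kronecker D m * kronecker D n := by
  have hdiv : m * n / 2 ^ (padicValNat 2 m + padicValNat 2 n)
      = (m / 2 ^ padicValNat 2 m) * (n / 2 ^ padicValNat 2 n) := by
    rw [pow_add, Nat.div_mul_div_comm pow_padicValNat_dvd pow_padicValNat_dvd]
  have hcompl : ∀ k ≠ 0, k / 2 ^ padicValNat 2 k ≠ 0 := fun k hk =>
    (Nat.div_pos (Nat.le_of_dvd (Nat.pos_of_ne_zero hk) pow_padicValNat_dvd) (by positivity)).ne'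
  unfold kronecker
  rw [padicValNat.mul hm hn, hdiv, pow_add, jacobiSym.mul_right' _ (hcompl m hm) (hcompl n hn)]
  ring

lemma kronecker_eq_legendreSym (D : ℤ) {p : ℕ} [Fact p.Prime] (hp2 : p ≠ 2) :
    kronecker D p = legendreSym p D := by
  have hval : padicValNat 2 p = 0 :=
    padicValNat.eq_zero_of_not_dvd fun h => hp2 ((Nat.prime_dvd_prime_iff_eq Nat.prime_two
      Fact.out).mp h).symm
  simp [kronecker, hval, jacobiSym.legendreSym.to_jacobiSym]

lemma legendreSym_mul_sq (p : ℕ) [Fact p.Prime] (a v : ℤ) :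
    legendreSym p (a * v ^ 2) = if (p : ℤ) ∣ v then 0 else legendreSym p a := by
  split_ifs with hpv
  · rw [legendreSym.eq_zero_iff]
    push_cast
    rw [(ZMod.intCast_zmod_eq_zero_iff_dvd v p).mpr hpv]
    ring
  · rw [legendreSym.mul, legendreSym.sq_one' p (by rwa [Ne, ZMod.intCast_zmod_eq_zero_iff_dvd]),
      mul_one]

/-- `χ_D` as an arithmetic function; the value `kronecker D 0 = 1` is overridden by `0`. -/
noncomputable def kroneckerChar (D : ℤ) : ArithmeticFunction ℂ :=
  ⟨fun m => if m = 0 then 0 else (kronecker D m : ℂ), if_pos rfl⟩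

lemma kroneckerChar_apply (D : ℤ) {m : ℕ} (hm : m ≠ 0) : kroneckerChar D m = kronecker D m :=
  if_neg hm

lemma isMultiplicative_kroneckerChar (D : ℤ) : (kroneckerChar D).IsMultiplicative := by
  refine ⟨by simp [kroneckerChar_apply, kronecker_one], fun {m n} _ => ?_⟩
  rcases eq_or_ne m 0 with rfl | hm
  · simp [kroneckerChar]
  rcases eq_or_ne n 0 with rfl | hn
  · simp [kroneckerChar]
  rw [kroneckerChar_apply D (mul_ne_zero hm hn), kroneckerChar_apply D hm,
    kroneckerChar_apply D hn, kronecker_mul D hm hn, Int.cast_mul]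

lemma ArithmeticFunction.mul_apply_eq_sum_divisors {R : Type*} [Semiring R]
    (f g : ArithmeticFunction R) (n : ℕ) : (f * g) n = ∑ d ∈ n.divisors, f d * g (n / d) :=
  mul_apply.trans (Nat.sum_divisorsAntidiagonal fun a b => f a * g b)

lemma geom_sum_range_succ_succ_add {R : Type*} [CommRing R] (X : R) (n : ℕ) :
    ∑ j ∈ range (n + 2), X ^ j + X * ∑ j ∈ range n, X ^ j
      = (X + 1) * ∑ j ∈ range (n + 1), X ^ j := by
  simp only [sum_range_succ]
  ring

lemma ArithmeticFunction.IsMultiplicative.map_mul_prime_add_map_div_prime {R : Type*}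
    [CommRing R] {f : ArithmeticFunction R} (hf : f.IsMultiplicative) {p : ℕ} (hp : p.Prime)
    {X : R} (hrec : ∀ n, f (p ^ (n + 2)) + X * f (p ^ n) = (X + 1) * f (p ^ (n + 1)))
    {v : ℕ} (hv : v ≠ 0) (hpv : p ∣ v) :
    f (v * p) + X * f (v / p) = (X + 1) * f v := by
  obtain ⟨e, u, hpu, rfl⟩ := Nat.exists_eq_pow_mul_and_not_dvd hv p hp.ne_one
  obtain ⟨n, rfl⟩ : ∃ n, e = n + 1 :=
    Nat.exists_eq_add_one.mpr (Nat.pos_of_ne_zero fun he => hpu (by simpa [he] using hpv))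
  have hcop : ∀ k, (p ^ k).Coprime u := fun k => (hp.coprime_iff_not_dvd.mpr hpu).pow_left k
  have hvp : p ^ (n + 1) * u * p = p ^ (n + 2) * u := by ring
  have hvdiv : p ^ (n + 1) * u / p = p ^ n * u := by
    rw [pow_succ, mul_right_comm, Nat.mul_div_cancel _ hp.pos]
  rw [hvp, hvdiv, hf.map_mul_of_coprime (hcop _), hf.map_mul_of_coprime (hcop _),
    hf.map_mul_of_coprime (hcop _)]
  linear_combination f u * hrec n

lemma natCast_sigma_apply_prime_pow {R : Type*} [Semiring R] (k : ℕ) {p : ℕ} (hp : p.Prime)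
    (n : ℕ) :
    ((σ k (p ^ n) : ℕ) : R) = ∑ j ∈ range (n + 1), ((p : R) ^ k) ^ j := by
  simp [sigma_apply_prime_pow hp, ← pow_mul, mul_comm]

section heckeT

variable {R : Type*} [CommRing R]

noncomputable def twistedMoebius (χ : ArithmeticFunction R) (r : ℕ) : ArithmeticFunction R :=
  ((μ : ArithmeticFunction R).pmul χ).pmul (pow r : ArithmeticFunction R)

noncomputable def heckeT (χ : ArithmeticFunction R) (r : ℕ) : ArithmeticFunction R :=
  twistedMoebius χ r * (σ (2 * r + 1) : ArithmeticFunction R)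

variable {χ : ArithmeticFunction R}

lemma isMultiplicative_twistedMoebius (hχ : χ.IsMultiplicative) (r : ℕ) :
    (twistedMoebius χ r).IsMultiplicative :=
  (isMultiplicative_moebius.intCast.pmul hχ).pmul isMultiplicative_pow.natCast

lemma twistedMoebius_apply_prime (r : ℕ) {p : ℕ} (hp : p.Prime) :
    twistedMoebius χ r p = -(χ p * (p : R) ^ r) := by
  simp [twistedMoebius, pmul_apply, moebius_apply_prime hp, hp.ne_zero]

lemma twistedMoebius_apply_prime_pow_add_two (r : ℕ) {p : ℕ} (hp : p.Prime) (k : ℕ) :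
    twistedMoebius χ r (p ^ (k + 2)) = 0 := by
  simp [twistedMoebius, pmul_apply, moebius_apply_prime_pow hp]

lemma isMultiplicative_heckeT (hχ : χ.IsMultiplicative) (r : ℕ) :
    (heckeT χ r).IsMultiplicative :=
  (isMultiplicative_twistedMoebius hχ r).mul isMultiplicative_sigma.natCast

lemma heckeT_apply_prime_pow (hχ : χ.IsMultiplicative) (r : ℕ) {p : ℕ} (hp : p.Prime)
    (n : ℕ) :
    heckeT χ r (p ^ n) = ∑ j ∈ range (n + 1), ((p : R) ^ (2 * r + 1)) ^ j
      - χ p * (p : R) ^ r * ∑ j ∈ range n, ((p : R) ^ (2 * r + 1)) ^ j := by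
  have hG1 := (isMultiplicative_twistedMoebius hχ r).map_one
  rw [heckeT, mul_apply_eq_sum_divisors, Nat.sum_divisors_prime_pow hp]
  cases n with
  | zero => simp [hG1]
  | succ n =>
    rw [sum_range_succ', sum_range_succ',
      sum_eq_zero fun i _ => by rw [twistedMoebius_apply_prime_pow_add_two r hp, zero_mul]]
    have hdiv : p ^ (n + 1) / p = p ^ n := Nat.div_eq_of_eq_mul_left hp.pos rfl
    simp only [zero_add, pow_one, pow_zero, Nat.div_one, hdiv, hG1, twistedMoebius_apply_prime r hp,
      natCoe_apply, natCast_sigma_apply_prime_pow _ hp]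
    ring

lemma heckeT_apply_prime_pow_add_two (hχ : χ.IsMultiplicative) (r : ℕ) {p : ℕ} (hp : p.Prime)
    (n : ℕ) :
    heckeT χ r (p ^ (n + 2)) + (p : R) ^ (2 * r + 1) * heckeT χ r (p ^ n)
      = ((p : R) ^ (2 * r + 1) + 1) * heckeT χ r (p ^ (n + 1)) := by
  simp only [heckeT_apply_prime_pow hχ r hp]
  linear_combination geom_sum_range_succ_succ_add ((p : R) ^ (2 * r + 1)) (n + 1)
    - χ p * (p : R) ^ r * geom_sum_range_succ_succ_add ((p : R) ^ (2 * r + 1)) n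

end heckeT

lemma TT_eq_heckeT (D : ℤ) (r v : ℕ) :
    TT (fun a => ((kronecker D a : ℤ) : ℂ)) ((r : ℂ) + 1) v
      = heckeT (kroneckerChar D) r v := by
  rw [heckeT, mul_apply_eq_sum_divisors, TT]
  refine sum_congr rfl fun a ha => ?_
  have ha0 : a ≠ 0 := Nat.ne_of_gt (Nat.pos_of_mem_divisors ha)
  have hexp : 2 * ((r : ℂ) + 1) - 1 = ((2 * r + 1 : ℕ) : ℂ) := by push_cast; ring
  simp only [twistedMoebius, sigmaC, hexp, add_sub_cancel_right, Complex.cpow_natCast, pmul_apply,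
    intCoe_apply, natCoe_apply, kroneckerChar_apply D ha0, pow_apply, ha0, and_false, if_false,
    sigma_apply, Nat.cast_sum, Nat.cast_pow]

/-- The coefficient `c(M)` of an `M` with `(-1)^r M = D v²`. -/
noncomputable def maassCoeff (r : ℕ) (D : ℤ) (v : ℕ) : ℂ :=
  LKron D ((r : ℂ) + 1) * TT (fun a => ((kronecker D a : ℤ) : ℂ)) ((r : ℂ) + 1) v /
    ((v : ℂ)) ^ (2 * r + 1)

lemma maassCoeff_mul_prime_add (r : ℕ) (D : ℤ) {p : ℕ} (hp : p.Prime) {v : ℕ}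
    (hv : v ≠ 0) :
    maassCoeff r D (v * p)
        + ((if p ∣ v then 0 else kronecker D p : ℤ) : ℂ) * ((p : ℂ) ^ (r + 1))⁻¹
          * maassCoeff r D v
        + ((p : ℂ) ^ (2 * r + 1))⁻¹ * (if p ∣ v then maassCoeff r D (v / p) else 0)
      = (1 + ((p : ℂ) ^ (2 * r + 1))⁻¹) * maassCoeff r D v := by
  have hχ := isMultiplicative_kroneckerChar D
  have hp0 : (p : ℂ) ≠ 0 := Nat.cast_ne_zero.mpr hp.ne_zero
  simp only [maassCoeff, TT_eq_heckeT]
  split_ifs with hpv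
  · obtain ⟨w, rfl⟩ := hpv
    have key := (isMultiplicative_heckeT hχ r).map_mul_prime_add_map_div_prime hp
      (heckeT_apply_prime_pow_add_two hχ r hp) hv (dvd_mul_right p w)
    rw [Nat.mul_div_cancel_left w hp.pos] at key ⊢
    have hw0 : (w : ℂ) ≠ 0 := Nat.cast_ne_zero.mpr (right_ne_zero_of_mul hv)
    push_cast
    field_simp
    linear_combination LKron D ((r : ℂ) + 1) * (p : ℂ) ^ (r + 1) * ((p : ℂ) ^ (2 * r + 1)) ^ 2
      * ((w : ℂ) ^ (2 * r + 1)) ^ 2 * key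
  · have key : heckeT (kroneckerChar D) r (v * p)
        = ((p : ℂ) ^ (2 * r + 1) + 1 - kronecker D p * (p : ℂ) ^ r)
          * heckeT (kroneckerChar D) r v := by
      rw [(isMultiplicative_heckeT hχ r).map_mul_of_coprime
        (Nat.coprime_comm.mp (hp.coprime_iff_not_dvd.mpr hpv)), ← pow_one p,
        heckeT_apply_prime_pow hχ r hp 1]
      simp only [kroneckerChar_apply _ hp.ne_zero, sum_range_succ, sum_range_zero, pow_zero,
        pow_one]
      ring
    have hv0 : (v : ℂ) ≠ 0 := Nat.cast_ne_zero.mpr hv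
    rw [key]
    push_cast
    field_simp
    ring

theorem coeff_hecke_relation_general (r : ℕ) (p : ℕ) [hp : Fact p.Prime]
    (hodd : Odd p) (N : ℕ) (hN : 0 < N)
    (hmod : ((-1 : ℤ) ^ r * (N : ℤ)) % 4 = 0 ∨ ((-1 : ℤ) ^ r * (N : ℤ)) % 4 = 1)
    (c : ℕ → ℂ)
    (hc : ∀ M : ℕ, 0 < M → ∀ D : ℤ, ∀ v : ℕ, IsFundDisc D → 0 < v →
        (-1 : ℤ) ^ r * (M : ℤ) = D * (v : ℤ) ^ 2 →
        c M = LKron D ((r : ℂ) + 1) * TT (fun a => ((kronecker D a : ℤ) : ℂ)) ((r : ℂ) + 1) v /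
          ((v : ℂ)) ^ (2 * r + 1)) :
    c (p ^ 2 * N) + ((legendreSym p ((-1) ^ r * (N : ℤ)) : ℤ) : ℂ) * ((p : ℂ) ^ (r + 1))⁻¹ * c N
        + ((p : ℂ) ^ (2 * r + 1))⁻¹ * (if p ^ 2 ∣ N then c (N / p ^ 2) else 0)
      = (1 + ((p : ℂ) ^ (2 * r + 1))⁻¹) * c N := by
  have hp2 : p ≠ 2 := by rintro rfl; norm_num at hodd
  obtain ⟨D, v, hD, hv, hNv⟩ := exists_isFundDisc_mul_sq
    (mul_ne_zero (pow_ne_zero r (by norm_num)) (Int.natCast_ne_zero.mpr hN.ne')) hmod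
  have hcoeff : ∀ M w : ℕ, 0 < M → 0 < w → (-1 : ℤ) ^ r * M = D * (w : ℤ) ^ 2 →
      c M = maassCoeff r D w := fun M w hM hw h => hc M hM D w hD hw h
  have hleg : legendreSym p ((-1) ^ r * N) = if p ∣ v then 0 else kronecker D p := by
    simp only [hNv, legendreSym_mul_sq, Int.natCast_dvd_natCast, kronecker_eq_legendreSym D hp2]
  have hpN : p ^ 2 ∣ N ↔ p ∣ v := hD.sq_dvd_iff_dvd_of_neg_one_pow_mul_eq hp.out hp2 hNv
  have hquot : (if p ^ 2 ∣ N then c (N / p ^ 2) else 0)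
      = if p ∣ v then maassCoeff r D (v / p) else 0 := by
    simp only [hpN]
    split_ifs with hpv
    · obtain ⟨w, rfl⟩ := hpv
      obtain ⟨M, rfl⟩ := hpN.mpr ⟨w, rfl⟩
      rw [Nat.mul_div_cancel_left _ (pow_pos hp.out.pos 2), Nat.mul_div_cancel_left _ hp.out.pos]
      refine hcoeff M w (Nat.pos_of_mul_pos_left hN) (Nat.pos_of_mul_pos_left hv) ?_
      refine mul_left_cancel₀ (pow_ne_zero 2 (Int.natCast_ne_zero.mpr hp.out.ne_zero)) ?_
      push_cast at hNv
      linear_combination hNv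
    · rfl
  rw [hcoeff N v hN hv hNv, hcoeff (p ^ 2 * N) (v * p) (Nat.mul_pos (pow_pos hp.out.pos 2) hN)
    (Nat.mul_pos hv hp.out.pos)
    (by push_cast; linear_combination (p : ℤ) ^ 2 * hNv), hleg, hquot]
  exact maassCoeff_mul_prime_add r D hp.out hv.ne'

/-- the holomorphic coefficients
`c(M) = L(1+r, χ_D) T_{r+1}^{χ_D}(v) / v^(2r+1)` (where `(-1)^r M = D v²`) satisfy the
weight `-r + 1/2` Hecke relation at an odd prime `p` with eigenvalue `1 + p^(-2r-1)`. -/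
theorem coeff_hecke_relation (r : ℕ) (hr : 1 ≤ r) (p : ℕ) [hp : Fact p.Prime]
    (hodd : Odd p) (N : ℕ) (hN : 0 < N)
    (hmod : ((-1 : ℤ) ^ r * (N : ℤ)) % 4 = 0 ∨ ((-1 : ℤ) ^ r * (N : ℤ)) % 4 = 1)
    (c : ℕ → ℂ)
    (hc : ∀ M : ℕ, 0 < M → ∀ D : ℤ, ∀ v : ℕ, IsFundDisc D → 0 < v →
        (-1 : ℤ) ^ r * (M : ℤ) = D * (v : ℤ) ^ 2 →
        c M = LKron D ((r : ℂ) + 1) * TT (fun a => ((kronecker D a : ℤ) : ℂ)) ((r : ℂ) + 1) v /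
          ((v : ℂ)) ^ (2 * r + 1)) :
    c (p ^ 2 * N) + ((legendreSym p ((-1) ^ r * (N : ℤ)) : ℤ) : ℂ) * ((p : ℂ) ^ (r + 1))⁻¹ * c N
        + ((p : ℂ) ^ (2 * r + 1))⁻¹ * (if p ^ 2 ∣ N then c (N / p ^ 2) else 0)
      = (1 + ((p : ℂ) ^ (2 * r + 1))⁻¹) * c N :=
  coeff_hecke_relation_general r p (hp := hp) hodd N hN hmod c hc
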